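/- arXiv:math/0611088 — 6 statements merged into one kernel-verified Lean document; each statement's English description precedes it below -/
import Mathlib

section
/- Let f be a bounded continuous function on [0,∞) and let f̃ be its least concave majorant. Let 0 < a < a' < ∞ and c = (a+a')/2. If f(c) > (f̃(a) + f̃(a'))/2, then f(t) = f̃(t) for some t with a ≤ t ≤ a'. -/
open Set

/-- `g` is the least concave majorant of `f` on the set `S`: `g` is concave on `S`,
dominates `f` on `S`, and is pointwise below any concave function on `S` dominating `f`. -/
def IsLeastConcaveMajorant (S : Set ℝ) (f g : ℝ → ℝ) : Prop :=
  ConcaveOn ℝ S g ∧ (∀ x ∈ S, f x ≤ g x) ∧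
    ∀ h : ℝ → ℝ, ConcaveOn ℝ S h → (∀ x ∈ S, f x ≤ h x) → ∀ x ∈ S, g x ≤ h x

/-!
Let `L` be the secant of `f̃` through `a` and `a'`, and let `t` maximize `f - L` on `[a, a']`,
with maximum `M`; the midpoint hypothesis gives `M > 0`. Outside `(a, a')` a concave function lies
below its secant, so `f ≤ f̃ ≤ L ≤ L + M` there, while `f ≤ L + M` on `[a, a']` by the choice of
`t`. Thus the affine function `L + M` is a concave majorant of `f`, whence
`f̃ t ≤ L t + M = f t ≤ f̃ t`.
-/

noncomputable def secant (g : ℝ → ℝ) (a a' x : ℝ) : ℝ :=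
  g a + (g a' - g a) / (a' - a) * (x - a)

theorem secant_midpoint (g : ℝ → ℝ) {a a' : ℝ} (haa' : a ≠ a') :
    secant g a a' ((a + a') / 2) = (g a + g a') / 2 := by
  rw [secant]; field_simp [sub_ne_zero.2 haa'.symm]; ring

theorem concaveOn_affine {S : Set ℝ} (hS : Convex ℝ S) (m b : ℝ) :
    ConcaveOn ℝ S fun x => m * x + b :=
  ⟨hS, fun _ _ _ _ _ _ _ _ hpq => le_of_eq <| by
    simp only [smul_eq_mul]; linear_combination b * hpq⟩

theorem ConcaveOn.le_secant_of_notMem_Ioo {S : Set ℝ} {g : ℝ → ℝ} (hg : ConcaveOn ℝ S g)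
    {a a' x : ℝ} (ha : a ∈ S) (ha' : a' ∈ S) (hx : x ∈ S) (haa' : a < a')
    (hxI : x ∉ Ioo a a') :
    g x ≤ secant g a a' x := by
  rw [secant]
  set s := (g a' - g a) / (a' - a)
  have hga' : g a' = g a + s * (a' - a) := by
    simp only [s]; field_simp [(sub_pos.2 haa').ne']; ring
  rcases lt_trichotomy x a with hxa | rfl | hax
  · have hslope := hg.slope_anti_adjacent hx ha' hxa haa'
    rw [le_div_iff₀ (sub_pos.2 hxa)] at hslope
    linarith
  · simp
  obtain hxa' | rfl := (le_of_not_gt fun hxa' => hxI ⟨hax, hxa'⟩).lt_or_eq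
  · have hslope := hg.slope_anti_adjacent ha hx haa' hxa'
    rw [div_le_iff₀ (sub_pos.2 hxa')] at hslope
    linarith
  · linarith

theorem IsLeastConcaveMajorant.eq_of_isMaxOn_sub_secant {S : Set ℝ} {f g : ℝ → ℝ}
    (h : IsLeastConcaveMajorant S f g) {a a' t : ℝ} (ha : a ∈ S) (ha' : a' ∈ S) (haa' : a < a')
    (ht : t ∈ Icc a a') (hmax : IsMaxOn (fun x => f x - secant g a a' x) (Icc a a') t)
    (hsecant : secant g a a' t ≤ f t) :
    f t = g t := by
  obtain ⟨hconc, hmaj, hleast⟩ := h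
  set s := (g a' - g a) / (a' - a)
  set M := f t - secant g a a' t
  have hline : ∀ x, secant g a a' x + M = s * x + (g a - s * a + M) := fun x => by
    rw [secant]; ring
  have hIcc : Icc a a' ⊆ S := hconc.1.ordConnected.out ha ha'
  have hmajorant : ∀ x ∈ S, f x ≤ s * x + (g a - s * a + M) := by
    intro x hx
    rw [← hline]
    by_cases hxI : x ∈ Ioo a a'
    · have hx_le : f x - secant g a a' x ≤ M := hmax (Ioo_subset_Icc_self hxI)
      linarith
    · have hg_le := hconc.le_secant_of_notMem_Ioo ha ha' hx haa' hxI
      linarith [hmaj x hx]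
  have hgt := hleast _ (concaveOn_affine hconc.1 s _) hmajorant t (hIcc ht)
  rw [← hline] at hgt
  linarith [hmaj t (hIcc ht)]

theorem lcm_touches_of_midpoint_above_general
    (f ftil : ℝ → ℝ)
    (hcont : ContinuousOn f (Ici (0 : ℝ)))
    (hlcm : IsLeastConcaveMajorant (Ici (0 : ℝ)) f ftil)
    (a a' : ℝ) (ha : 0 < a) (haa' : a < a')
    (hmid : (ftil a + ftil a') / 2 < f ((a + a') / 2)) :
    ∃ t ∈ Icc a a', f t = ftil t := by
  have hIcc : Icc a a' ⊆ Ici 0 := fun x hx => ha.le.trans hx.1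
  obtain ⟨t, ht, hmax⟩ := isCompact_Icc.exists_isMaxOn (nonempty_Icc.2 haa'.le)
    (f := fun x => f x - secant ftil a a' x)
    ((hcont.mono hIcc).sub (by unfold secant; fun_prop))
  refine ⟨t, ht, hlcm.eq_of_isMaxOn_sub_secant (hIcc ⟨le_rfl, haa'.le⟩)
    (hIcc ⟨haa'.le, le_rfl⟩) haa' ht hmax ?_⟩
  have hmid_le : f ((a + a') / 2) - secant ftil a a' ((a + a') / 2) ≤ f t - secant ftil a a' t :=
    hmax ⟨by linarith, by linarith⟩
  rw [secant_midpoint ftil haa'.ne] at hmid_le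
  linarith

/-- Lemma 5.1: if `f` is bounded and continuous on `[0,∞)`, `f̃` is its least concave
majorant, `0 < a < a' < ∞`, `c = (a+a')/2`, and `f(c) > (f̃(a)+f̃(a'))/2`, then
`f(t) = f̃(t)` for some `t ∈ [a, a']`. -/
theorem lcm_touches_of_midpoint_above
    (f ftil : ℝ → ℝ)
    (hbd : ∃ C : ℝ, ∀ x ∈ Ici (0 : ℝ), |f x| ≤ C)
    (hcont : ContinuousOn f (Ici (0 : ℝ)))
    (hlcm : IsLeastConcaveMajorant (Ici (0 : ℝ)) f ftil)
    (a a' : ℝ) (ha : 0 < a) (haa' : a < a')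
    (hmid : (ftil a + ftil a') / 2 < f ((a + a') / 2)) :
    ∃ t ∈ Icc a a', f t = ftil t :=
  lcm_touches_of_midpoint_above_general f ftil hcont hlcm a a' ha haa' hmid
end

section
/- Let f be a bounded function on [0,∞) and let f̃ be its least concave majorant. Let 0 ≤ z₀ ≤ x₀ ≤ t₀ < t₁ < x₁ < z₁ < ∞, with all the inequalities strict if t₀ > 0, and let f* be the least concave majorant of the restriction of f to [z₀,z₁]. If f̃(x₀) = f(x₀) and f̃(x₁) = f(x₁), then f̃(t) = f*(t) for all x₀ ≤ t ≤ x₁. -/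
/-! The least concave majorant on `[0,∞)` dominates the one on `[z₀,z₁]`, and they agree at the
touching points `x₀`, `x₁`. Replacing `f̃` on `[x₀,x₁]` by `f*` therefore yields a function that is
still a concave majorant of `f` on `[0,∞)`: concavity only has to be checked across the seams,
where the chord of the glued function over an interval straddling `x₀` or `x₁` lies below the
chord of `f̃`, hence below `f̃(xᵢ) = f*(xᵢ)`. Minimality of `f̃` then gives `f̃ ≤ f*` on `[x₀,x₁]`. -/

open Set

theorem chord_le_iff_slope_anti {x c y A B C : ℝ} (hxc : x < c) (hcy : c < y) :
    (y - c) * A + (c - x) * B ≤ (y - x) * C ↔ (B - C) / (y - c) ≤ (C - A) / (c - x) := by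
  rw [div_le_div_iff₀ (sub_pos.2 hcy) (sub_pos.2 hxc)]
  constructor <;> intro h <;> linarith

theorem concaveOn_iff_chord_le {s : Set ℝ} {g : ℝ → ℝ} :
    ConcaveOn ℝ s g ↔ Convex ℝ s ∧ ∀ ⦃x c y : ℝ⦄, x ∈ s → y ∈ s → x < c → c < y →
      (y - c) * g x + (c - x) * g y ≤ (y - x) * g c := by
  rw [concaveOn_iff_slope_anti_adjacent]
  exact and_congr_right fun _ =>
    ⟨fun h _ _ _ hx hy hxc hcy => (chord_le_iff_slope_anti hxc hcy).2 (h hx hy hxc hcy),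
      fun h _ _ _ hx hy hxc hcy => (chord_le_iff_slope_anti hxc hcy).1 (h hx hy hxc hcy)⟩

theorem ConcaveOn.chord_le {s : Set ℝ} {g : ℝ → ℝ} (hg : ConcaveOn ℝ s g) {x c y : ℝ}
    (hx : x ∈ s) (hy : y ∈ s) (hxc : x ≤ c) (hcy : c ≤ y) :
    (y - c) * g x + (c - x) * g y ≤ (y - x) * g c := by
  rcases hxc.eq_or_lt with rfl | hxc
  · simp
  rcases hcy.eq_or_lt with rfl | hcy
  · simp
  exact (concaveOn_iff_chord_le.1 hg).2 hx hy hxc hcy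

theorem chord_le_chord {x c y A B A' B' : ℝ} (hxc : x ≤ c) (hcy : c ≤ y) (hA : A ≤ A')
    (hB : B ≤ B') : (y - c) * A + (c - x) * B ≤ (y - c) * A' + (c - x) * B' := by
  gcongr

/-- If the chord over `[x,y]` lies below the values `U`, `V` at `u`, `v`, and the chord through
`(u,U)`, `(v,V)` lies below `C` at `c ∈ [u,v]`, then the chord over `[x,y]` lies below `C` at `c`. -/
theorem chord_le_of_chord_le_of_chord_le {x y u v c A B U V C : ℝ} (hxy : x ≤ y) (huv : u < v)
    (huc : u ≤ c) (hcv : c ≤ v) (hU : (y - u) * A + (u - x) * B ≤ (y - x) * U)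
    (hV : (y - v) * A + (v - x) * B ≤ (y - x) * V)
    (hS : (v - c) * U + (c - u) * V ≤ (v - u) * C) :
    (y - c) * A + (c - x) * B ≤ (y - x) * C := by
  refine le_of_mul_le_mul_left ?_ (sub_pos.2 huv)
  have hcomb := add_le_add (mul_le_mul_of_nonneg_left hU (sub_nonneg.2 hcv))
    (mul_le_mul_of_nonneg_left hV (sub_nonneg.2 huc))
  nlinarith [mul_le_mul_of_nonneg_left hS (sub_nonneg.2 hxy)]

theorem ConcaveOn.piecewise_Icc {s : Set ℝ} {g k : ℝ → ℝ} {a b : ℝ} (hg : ConcaveOn ℝ s g)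
    (hk : ConcaveOn ℝ (Icc a b) k) (hkg : ∀ t ∈ Icc a b, k t ≤ g t) (ha : k a = g a)
    (hb : k b = g b) : ConcaveOn ℝ s ((Icc a b).piecewise k g) := by
  set h := (Icc a b).piecewise k g
  have hle : ∀ t, h t ≤ g t := fun t => by
    by_cases ht : t ∈ Icc a b
    · simpa [h, piecewise_eq_of_mem _ _ _ ht] using hkg t ht
    · simp [h, piecewise_eq_of_notMem _ _ _ ht]
  refine concaveOn_iff_chord_le.2 ⟨hg.1, fun x c y hx hy hxc hcy => ?_⟩
  have hg_chord : ∀ ⦃t⦄, x ≤ t → t ≤ y → (y - t) * h x + (t - x) * h y ≤ (y - x) * g t :=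
    fun t hxt hty => (chord_le_chord hxt hty (hle x) (hle y)).trans (hg.chord_le hx hy hxt hty)
  by_cases hc : c ∈ Icc a b
  swap
  · simpa [h, piecewise_eq_of_notMem _ _ _ hc] using hg_chord hxc.le hcy.le
  have hmem : ∀ ⦃t⦄, t ∈ Icc a b → h t = k t := fun t ht => piecewise_eq_of_mem _ _ _ ht
  have hab : a ≤ b := hc.1.trans hc.2
  set u := max x a
  set v := min y b
  have hu : u ∈ Icc a b := ⟨le_max_right _ _, max_le (hxc.le.trans hc.2) hab⟩
  have hv : v ∈ Icc a b := ⟨le_min (hc.1.trans hcy.le) hab, min_le_right _ _⟩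
  have huc : u ≤ c := max_le hxc.le hc.1
  have hcv : c ≤ v := le_min hcy.le hc.2
  have hU : (y - u) * h x + (u - x) * h y ≤ (y - x) * h u := by
    rcases le_total a x with hax | hxa
    · simp [u, max_eq_left hax]
    · have hau : u = a := max_eq_right hxa
      rw [hau, hmem (left_mem_Icc.2 hab), ha]
      exact hg_chord hxa (hc.1.trans hcy.le)
  have hV : (y - v) * h x + (v - x) * h y ≤ (y - x) * h v := by
    rcases le_total y b with hyb | hby
    · simp [v, min_eq_left hyb]
    · have hbv : v = b := min_eq_right hby
      rw [hbv, hmem (right_mem_Icc.2 hab), hb]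
      exact hg_chord (hxc.le.trans hc.2) hby
  rcases huc.eq_or_lt with hcu | hu_lt_c
  · rwa [← hcu]
  have hS : (v - c) * h u + (c - u) * h v ≤ (v - u) * h c := by
    rw [hmem hu, hmem hv, hmem hc]
    exact hk.chord_le hu hv huc hcv
  exact chord_le_of_chord_le_of_chord_le (hxc.trans hcy).le (hu_lt_c.trans_le hcv) huc hcv hU hV hS

theorem IsLeastConcaveMajorant.le_of_subset {S T : Set ℝ} {f g gT : ℝ → ℝ}
    (hS : IsLeastConcaveMajorant S f g) (hT : IsLeastConcaveMajorant T f gT) (hST : S ⊆ T)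
    (hSc : Convex ℝ S) : ∀ x ∈ S, g x ≤ gT x :=
  hS.2.2 gT (hT.1.subset hST hSc) fun x hx => hT.2.1 x (hST hx)

theorem lcm_localization_general
    (f ftil fstar : ℝ → ℝ)
    (hlcm : IsLeastConcaveMajorant (Ici (0 : ℝ)) f ftil)
    (z₀ x₀ x₁ z₁ : ℝ)
    (h0 : 0 ≤ z₀) (hz₀x₀ : z₀ ≤ x₀)
    (hx₁z₁ : x₁ < z₁)
    (hlcm_star : IsLeastConcaveMajorant (Icc z₀ z₁) f fstar)
    (htouch₀ : ftil x₀ = f x₀) (htouch₁ : ftil x₁ = f x₁) :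
    ∀ t ∈ Icc x₀ x₁, ftil t = fstar t := by
  intro t ht
  have hsub : Icc x₀ x₁ ⊆ Icc z₀ z₁ := Icc_subset_Icc hz₀x₀ hx₁z₁.le
  have hstar_le : ∀ x ∈ Icc z₀ z₁, fstar x ≤ ftil x :=
    hlcm_star.le_of_subset hlcm (fun _ hx => h0.trans hx.1) (convex_Icc _ _)
  have htouch : ∀ x ∈ Icc x₀ x₁, ftil x = f x → fstar x = ftil x := fun x hx hfx =>
    (hstar_le x (hsub hx)).antisymm (hfx ▸ hlcm_star.2.1 x (hsub hx))
  have hx₀ : x₀ ∈ Icc x₀ x₁ := left_mem_Icc.2 (ht.1.trans ht.2)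
  have hx₁ : x₁ ∈ Icc x₀ x₁ := right_mem_Icc.2 (ht.1.trans ht.2)
  have hglue := hlcm.1.piecewise_Icc (hlcm_star.1.subset hsub (convex_Icc _ _))
    (fun x hx => hstar_le x (hsub hx)) (htouch x₀ hx₀ htouch₀) (htouch x₁ hx₁ htouch₁)
  have hmaj : ∀ x ∈ Ici (0 : ℝ), f x ≤ (Icc x₀ x₁).piecewise fstar ftil x := fun x hx0 => by
    by_cases hx : x ∈ Icc x₀ x₁
    · simpa [piecewise_eq_of_mem _ _ _ hx] using hlcm_star.2.1 x (hsub hx)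
    · simpa [piecewise_eq_of_notMem _ _ _ hx] using hlcm.2.1 x hx0
  have hle := hlcm.2.2 _ hglue hmaj t (h0.trans (hz₀x₀.trans ht.1))
  rw [piecewise_eq_of_mem _ _ _ ht] at hle
  exact hle.antisymm (hstar_le t (hsub ht))

/-- Lemma 5.2: let `f` be bounded on `[0,∞)` with least concave majorant `f̃`, let
`0 ≤ z₀ ≤ x₀ ≤ t₀ < t₁ < x₁ < z₁ < ∞`, with strict inequalities throughout if `t₀ > 0`,
and let `f*` be the least concave majorant of the restriction of `f` to `[z₀,z₁]`.
If `f̃(xᵢ) = f(xᵢ)` for `i = 0,1`, then `f̃ = f*` on `[x₀,x₁]`. -/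
theorem lcm_localization
    (f ftil fstar : ℝ → ℝ)
    (hbd : ∃ C : ℝ, ∀ x ∈ Ici (0 : ℝ), |f x| ≤ C)
    (hlcm : IsLeastConcaveMajorant (Ici (0 : ℝ)) f ftil)
    (z₀ x₀ t₀ t₁ x₁ z₁ : ℝ)
    (h0 : 0 ≤ z₀) (hz₀x₀ : z₀ ≤ x₀) (hx₀t₀ : x₀ ≤ t₀) (ht₀t₁ : t₀ < t₁)
    (ht₁x₁ : t₁ < x₁) (hx₁z₁ : x₁ < z₁)
    (hstrict : 0 < t₀ → 0 < z₀ ∧ z₀ < x₀ ∧ x₀ < t₀)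
    (hlcm_star : IsLeastConcaveMajorant (Icc z₀ z₁) f fstar)
    (htouch₀ : ftil x₀ = f x₀) (htouch₁ : ftil x₁ = f x₁) :
    ∀ t ∈ Icc x₀ x₁, ftil t = fstar t :=
  lcm_localization_general f ftil fstar hlcm z₀ x₀ x₁ z₁ h0 hz₀x₀ hx₁z₁ hlcm_star htouch₀ htouch₁
end

section
/- Suppose 0 ≤ z ≤ c₀ ν-a.e. on the support of Q and the marginal density ḡ(y) = ∫ g(y,z) ν(dz) satisfies ḡ ≤ c₁. Then there is a constant Γ₃ (depending only on c₀ and c₁) such that for all s,t ≥ 0 with 0 < |s−t| < 1, the L²(Q) norm satisfies ‖h_t − h_s‖_{L²(Q)} ≤ Γ₃ |t−s| √(log(2/|t−s|)). -/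
/-!
Write `δ = t - s` and `φ(y) = √((y-s)₊) - √((y-t)₊)`, so that `h_t - h_s = 2zφ(y)`.
Since `φ · (√((y-s)₊) + √((y-t)₊)) = (y-s)₊ - (y-t)₊ ≤ δ`, we get `φ² ≤ δ` everywhere and
`φ² ≤ δ²/(y-s)` for `y > s`. Bounding `z ≤ c₀` and integrating out `z` leaves
`4c₀² ∫ φ(y)² ḡ(y) dy`. On `[s, s+1]` we use `ḡ ≤ c₁` and the two bounds on `φ²`, which give
`δ² + δ² log(1/δ)`; off `[s, s+1]` we use `φ² ≤ δ²` and `∫ ḡ = 1`. Finally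
`1 + log(1/δ) ≤ 2 log(2/δ)`.
-/

open Set MeasureTheory
open scoped ENNReal NNReal

/-- `h_t(y,z) = 2z(√y − √((y−t)₊))`. -/
noncomputable def hker (t y z : ℝ) : ℝ :=
  2 * z * (Real.sqrt y - Real.sqrt (max (y - t) 0))

noncomputable def sqrtRamp (a y : ℝ) : ℝ := Real.sqrt (max (y - a) 0)

lemma hker_sub_hker (s t y z : ℝ) :
    hker t y z - hker s y z = 2 * z * (sqrtRamp s y - sqrtRamp t y) := by
  unfold hker sqrtRamp; ring

@[fun_prop]
lemma measurable_sqrtRamp (a : ℝ) : Measurable (sqrtRamp a) := by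
  unfold sqrtRamp; fun_prop

lemma sqrtRamp_eq_zero {a y : ℝ} (hy : y ≤ a) : sqrtRamp a y = 0 := by
  rw [sqrtRamp, max_eq_right (by linarith), Real.sqrt_zero]

lemma sqrtRamp_le_sqrtRamp {s t : ℝ} (hst : s ≤ t) (y : ℝ) : sqrtRamp t y ≤ sqrtRamp s y :=
  Real.sqrt_le_sqrt (max_le_max_right 0 (by linarith))

lemma sqrtRamp_sub_mul_add_le {s t : ℝ} (hst : s ≤ t) (y : ℝ) :
    (sqrtRamp s y - sqrtRamp t y) * (sqrtRamp s y + sqrtRamp t y) ≤ t - s := by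
  have ha := Real.sq_sqrt (le_max_right (y - s) 0)
  have hb := Real.sq_sqrt (le_max_right (y - t) 0)
  have : max (y - s) 0 ≤ max (y - t) 0 + (t - s) :=
    max_le (by linarith [le_max_left (y - t) 0]) (by linarith [le_max_right (y - t) 0])
  unfold sqrtRamp
  nlinarith

lemma sq_sqrtRamp_sub_le {s t : ℝ} (hst : s ≤ t) (y : ℝ) :
    (sqrtRamp s y - sqrtRamp t y) ^ 2 ≤ t - s := by
  have h := sqrtRamp_sub_mul_add_le hst y
  have := sqrtRamp_le_sqrtRamp hst y
  have : 0 ≤ sqrtRamp t y := Real.sqrt_nonneg _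
  nlinarith

lemma sq_sqrtRamp_sub_le_div {s t y : ℝ} (hst : s ≤ t) (hy : s < y) :
    (sqrtRamp s y - sqrtRamp t y) ^ 2 ≤ (t - s) ^ 2 / (y - s) := by
  have hys : 0 < y - s := by linarith
  have hsq : sqrtRamp s y ^ 2 = y - s := by
    rw [sqrtRamp, max_eq_left hys.le, Real.sq_sqrt hys.le]
  have h := sqrtRamp_sub_mul_add_le hst y
  have hφ := sub_nonneg.2 (sqrtRamp_le_sqrtRamp hst y)
  have : 0 ≤ sqrtRamp t y := Real.sqrt_nonneg _
  have hle : (sqrtRamp s y - sqrtRamp t y) * sqrtRamp s y ≤ t - s := by nlinarith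
  rw [le_div_iff₀ hys, ← hsq, ← mul_pow]
  exact pow_le_pow_left₀ (mul_nonneg hφ (Real.sqrt_nonneg _)) hle 2

lemma sq_sqrtRamp_sub_le_of_notMem_Icc {s t y : ℝ} (hst : s ≤ t) (hy : y ∉ Icc s (s + 1)) :
    (sqrtRamp s y - sqrtRamp t y) ^ 2 ≤ (t - s) ^ 2 := by
  rcases lt_or_ge y s with hys | hys
  · simp [sqrtRamp_eq_zero hys.le, sqrtRamp_eq_zero (hys.trans_le hst).le, sq_nonneg]
  · have hy1 : 1 ≤ y - s := by
      by_contra! h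
      exact hy ⟨hys, by linarith⟩
    exact (sq_sqrtRamp_sub_le_div hst (by linarith)).trans (div_le_self (sq_nonneg _) hy1)

lemma setLIntegral_Icc_ofReal_inv_sub {c a b : ℝ} (ha : 0 < a) (hab : a ≤ b) :
    ∫⁻ y in Icc (c + a) (c + b), ENNReal.ofReal (y - c)⁻¹ = ENNReal.ofReal (Real.log (b / a)) := by
  have hpos : ∀ y ∈ Icc (c + a) (c + b), 0 < y - c := fun y hy => by linarith [hy.1]
  have hint : IntegrableOn (fun y => (y - c)⁻¹) (Icc (c + a) (c + b)) :=
    ((continuousOn_id.sub continuousOn_const).inv₀ fun y hy => (hpos y hy).ne').integrableOn_Icc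
  rw [← ofReal_integral_eq_lintegral_ofReal hint
    ((ae_restrict_iff' measurableSet_Icc).2 (ae_of_all _ fun y hy => (inv_pos.2 (hpos y hy)).le)),
    integral_Icc_eq_integral_Ioc, ← intervalIntegral.integral_of_le (by linarith),
    intervalIntegral.integral_comp_sub_right (·⁻¹) c, add_sub_cancel_left, add_sub_cancel_left,
    integral_inv_of_pos ha (ha.trans_le hab)]

lemma setLIntegral_sq_sqrtRamp_sub_le {s t : ℝ} (hst : s < t) (ht : t - s ≤ 1) :
    ∫⁻ y in Icc s (s + 1), ENNReal.ofReal ((sqrtRamp s y - sqrtRamp t y) ^ 2)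
      ≤ ENNReal.ofReal ((t - s) ^ 2 * (1 + Real.log (1 / (t - s)))) := by
  set δ := t - s
  have hδ : 0 < δ := sub_pos.2 hst
  have near : ∫⁻ y in Icc s (s + δ), ENNReal.ofReal ((sqrtRamp s y - sqrtRamp t y) ^ 2)
      ≤ ENNReal.ofReal (δ ^ 2) :=
    calc _ ≤ ∫⁻ _ in Icc s (s + δ), ENNReal.ofReal δ :=
          setLIntegral_mono measurable_const
            fun y _ => ENNReal.ofReal_le_ofReal (sq_sqrtRamp_sub_le hst.le y)
      _ = ENNReal.ofReal (δ ^ 2) := by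
          rw [setLIntegral_const, Real.volume_Icc, add_sub_cancel_left,
            ← ENNReal.ofReal_mul hδ.le, sq]
  have far : ∫⁻ y in Icc (s + δ) (s + 1), ENNReal.ofReal ((sqrtRamp s y - sqrtRamp t y) ^ 2)
      ≤ ENNReal.ofReal (δ ^ 2 * Real.log (1 / δ)) :=
    calc _ ≤ ∫⁻ y in Icc (s + δ) (s + 1), ENNReal.ofReal (δ ^ 2) * ENNReal.ofReal (y - s)⁻¹ := by
          refine setLIntegral_mono (by fun_prop) fun y hy => ?_
          have hys : 0 < y - s := by linarith [hy.1]
          rw [← ENNReal.ofReal_mul (sq_nonneg δ), ← div_eq_mul_inv]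
          exact ENNReal.ofReal_le_ofReal (sq_sqrtRamp_sub_le_div hst.le (sub_pos.1 hys))
      _ = ENNReal.ofReal (δ ^ 2 * Real.log (1 / δ)) := by
          rw [lintegral_const_mul _ (by fun_prop), setLIntegral_Icc_ofReal_inv_sub hδ ht,
            ← ENNReal.ofReal_mul (sq_nonneg δ)]
  calc _ = ∫⁻ y in Icc s (s + δ) ∪ Icc (s + δ) (s + 1),
        ENNReal.ofReal ((sqrtRamp s y - sqrtRamp t y) ^ 2) := by
        rw [Icc_union_Icc_eq_Icc (by linarith) (by linarith)]
    _ ≤ ENNReal.ofReal (δ ^ 2) + ENNReal.ofReal (δ ^ 2 * Real.log (1 / δ)) :=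
        (lintegral_union_le _ _ _).trans (add_le_add near far)
    _ = ENNReal.ofReal (δ ^ 2 * (1 + Real.log (1 / δ))) := by
        have : 0 ≤ Real.log (1 / δ) := Real.log_nonneg (one_le_one_div hδ ht)
        rw [← ENNReal.ofReal_add (by positivity) (by positivity)]
        ring_nf

lemma lintegral_fst_withDensity_prod {α β : Type*} [MeasurableSpace α] [MeasurableSpace β]
    {μ : Measure α} {ν : Measure β} [SFinite ν] {g : α → β → ℝ≥0∞}
    (hg : Measurable (Function.uncurry g)) {F : α → ℝ≥0∞} (hF : Measurable F) :
    ∫⁻ p, F p.1 ∂(μ.prod ν).withDensity (fun p => g p.1 p.2)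
      = ∫⁻ x, F x * ∫⁻ y, g x y ∂ν ∂μ := by
  refine (lintegral_withDensity_eq_lintegral_mul _ hg (hF.comp measurable_fst)).trans ?_
  rw [lintegral_prod _ (hg.mul (hF.comp measurable_fst)).aemeasurable]
  refine lintegral_congr fun x => ?_
  show ∫⁻ y, g x y * F x ∂ν = _
  rw [lintegral_mul_const _ hg.of_uncurry_left, mul_comm]

lemma lintegral_mul_le_of_le_of_le_compl {α : Type*} [MeasurableSpace α] {μ : Measure α}
    {F G : α → ℝ≥0∞} {S : Set α} {b c : ℝ≥0∞} (hS : MeasurableSet S) (hF : Measurable F)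
    (hb : b ≠ ∞) (hG : ∀ x, G x ≤ c) (hFS : ∀ x ∉ S, F x ≤ b) :
    ∫⁻ x, F x * G x ∂μ ≤ c * ∫⁻ x in S, F x ∂μ + b * ∫⁻ x, G x ∂μ := by
  have hpt : ∀ x, F x * G x ≤ S.indicator (fun x => c * F x) x + b * G x := fun x => by
    by_cases hx : x ∈ S
    · rw [indicator_of_mem hx, mul_comm c]
      exact le_add_right (by gcongr; exact hG x)
    · rw [indicator_of_notMem hx, zero_add]
      gcongr
      exact hFS x hx
  calc _ ≤ ∫⁻ x, S.indicator (fun x => c * F x) x + b * G x ∂μ := lintegral_mono hpt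
    _ = c * ∫⁻ x in S, F x ∂μ + b * ∫⁻ x, G x ∂μ := by
      rw [lintegral_add_left ((hF.const_mul c).indicator hS), lintegral_indicator hS,
        lintegral_const_mul _ hF, lintegral_const_mul' _ _ hb]

lemma eLpNorm_two_le_ofReal {α : Type*} [MeasurableSpace α] {μ : Measure α} {f : α → ℝ} {B : ℝ}
    (hB : 0 ≤ B) (h : ∫⁻ x, ENNReal.ofReal (f x ^ 2) ∂μ ≤ ENNReal.ofReal (B ^ 2)) :
    eLpNorm f 2 μ ≤ ENNReal.ofReal B := by
  have hpow := eLpNorm_nnreal_pow_eq_lintegral (f := f) (μ := μ) (p := 2) two_ne_zero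
  simp only [ENNReal.coe_ofNat, NNReal.coe_ofNat] at hpow
  have hsq : ∀ r : ℝ, ‖r‖ₑ ^ (2 : ℝ) = ENNReal.ofReal (r ^ 2) := fun r => by
    rw [Real.enorm_eq_ofReal_abs, ENNReal.ofReal_rpow_of_nonneg (abs_nonneg r) zero_le_two,
      Real.rpow_two, sq_abs]
  rwa [← ENNReal.rpow_le_rpow_iff two_pos, hpow, ENNReal.ofReal_rpow_of_nonneg hB zero_le_two,
    Real.rpow_two, lintegral_congr fun x => hsq (f x)]

lemma lintegral_sq_hker_sub_le {ν : Measure ℝ} [SFinite ν] {g : ℝ → ℝ → ℝ}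
    (hg_meas : Measurable (Function.uncurry g)) {Q : Measure (ℝ × ℝ)} [IsProbabilityMeasure Q]
    (hQ : Q = ((volume.restrict (Ici (0 : ℝ))).prod ν).withDensity
      (fun p => ENNReal.ofReal (g p.1 p.2)))
    {c₀ : ℝ} (hzbd : ∀ᵐ p ∂Q, 0 ≤ p.2 ∧ p.2 ≤ c₀)
    {c₁ : ℝ} (hmarg : ∀ y : ℝ, (∫⁻ z, ENNReal.ofReal (g y z) ∂ν) ≤ ENNReal.ofReal c₁)
    {s t : ℝ} (hst : s < t) (ht : t - s ≤ 1) :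
    ∫⁻ p, ENNReal.ofReal ((hker t p.1 p.2 - hker s p.1 p.2) ^ 2) ∂Q
      ≤ ENNReal.ofReal
          (4 * c₀ ^ 2 * ((|c₁| * (1 + Real.log (1 / (t - s))) + 1) * (t - s) ^ 2)) := by
  set δ := t - s
  set F : ℝ → ℝ≥0∞ := fun y => ENNReal.ofReal ((sqrtRamp s y - sqrtRamp t y) ^ 2)
  have hF : Measurable F := by fun_prop
  have hg : Measurable (Function.uncurry fun y z => ENNReal.ofReal (g y z)) :=
    hg_meas.ennreal_ofReal
  have hQF : ∀ {G : ℝ → ℝ≥0∞}, Measurable G →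
      ∫⁻ p, G p.1 ∂Q = ∫⁻ y in Ici 0, G y * ∫⁻ z, ENNReal.ofReal (g y z) ∂ν := fun hG => by
    rw [hQ]; exact lintegral_fst_withDensity_prod hg hG
  have hmass : ∫⁻ y in Ici 0, ∫⁻ z, ENNReal.ofReal (g y z) ∂ν = 1 := by
    simpa using (hQF (G := 1) measurable_const).symm
  have hz : ∀ᵐ p ∂Q, ENNReal.ofReal ((hker t p.1 p.2 - hker s p.1 p.2) ^ 2)
      ≤ ENNReal.ofReal (4 * c₀ ^ 2) * F p.1 := by
    filter_upwards [hzbd] with p ⟨hz0, hzc⟩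
    rw [← ENNReal.ofReal_mul (by positivity), hker_sub_hker]
    refine ENNReal.ofReal_le_ofReal ?_
    have : p.2 ^ 2 ≤ c₀ ^ 2 := pow_le_pow_left₀ hz0 hzc 2
    nlinarith [sq_nonneg (sqrtRamp s p.1 - sqrtRamp t p.1)]
  have hFfar : ∀ y ∉ Icc s (s + 1), F y ≤ ENNReal.ofReal (δ ^ 2) := fun y hy =>
    ENNReal.ofReal_le_ofReal (sq_sqrtRamp_sub_le_of_notMem_Icc hst.le hy)
  have hnear : ∫⁻ y in Icc s (s + 1), F y ∂volume.restrict (Ici 0) ≤ ∫⁻ y in Icc s (s + 1), F y :=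
    lintegral_mono' (Measure.restrict_mono subset_rfl Measure.restrict_le_self) le_rfl
  calc _ ≤ ∫⁻ p, ENNReal.ofReal (4 * c₀ ^ 2) * F p.1 ∂Q := lintegral_mono_ae hz
    _ = ENNReal.ofReal (4 * c₀ ^ 2) * ∫⁻ y in Ici 0, F y * ∫⁻ z, ENNReal.ofReal (g y z) ∂ν := by
        rw [lintegral_const_mul' _ _ ENNReal.ofReal_ne_top, hQF hF]
    _ ≤ ENNReal.ofReal (4 * c₀ ^ 2) *
          (ENNReal.ofReal |c₁| * ENNReal.ofReal (δ ^ 2 * (1 + Real.log (1 / δ)))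
            + ENNReal.ofReal (δ ^ 2) * 1) := by
        gcongr
        rw [← hmass]
        refine (lintegral_mul_le_of_le_of_le_compl measurableSet_Icc hF ENNReal.ofReal_ne_top
          (fun y => (hmarg y).trans (ENNReal.ofReal_le_ofReal (le_abs_self c₁))) hFfar).trans ?_
        gcongr
        exact hnear.trans (setLIntegral_sq_sqrtRamp_sub_le hst ht)
    _ = _ := by
        have : 0 ≤ Real.log (1 / δ) := Real.log_nonneg (one_le_one_div (sub_pos.2 hst) ht)
        rw [← ENNReal.ofReal_mul (abs_nonneg c₁), mul_one,
          ← ENNReal.ofReal_add (by positivity) (by positivity),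
          ← ENNReal.ofReal_mul (by positivity)]
        ring_nf

lemma sq_mul_le_mul_log_two_div (a b : ℝ) {δ : ℝ} (hδ : 0 < δ) (hδ1 : δ ≤ 1) :
    4 * a ^ 2 * ((|b| * (1 + Real.log (1 / δ)) + 1) * δ ^ 2)
      ≤ 8 * (a ^ 2 + 1) * (|b| + 1) * (δ ^ 2 * Real.log (2 / δ)) := by
  have hlog : Real.log (2 / δ) = Real.log 2 + Real.log (1 / δ) := by
    rw [← Real.log_mul two_ne_zero (by positivity), mul_one_div]
  have hx : 0 ≤ Real.log (1 / δ) := Real.log_nonneg (one_le_one_div hδ hδ1)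
  have h2 := Real.log_two_gt_d9
  have key : |b| * (1 + Real.log (1 / δ)) + 1 ≤ 2 * (|b| + 1) * Real.log (2 / δ) := by
    rw [hlog]; nlinarith [abs_nonneg b]
  have : 0 ≤ |b| * (1 + Real.log (1 / δ)) + 1 := by positivity
  calc _ ≤ 4 * (a ^ 2 + 1) * ((2 * (|b| + 1) * Real.log (2 / δ)) * δ ^ 2) := by gcongr; linarith
    _ = _ := by ring

theorem hker_L2_modulus_general
    (ν : Measure ℝ) [SigmaFinite ν]
    (g : ℝ → ℝ → ℝ) (hg_meas : Measurable (Function.uncurry g))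
    (Q : Measure (ℝ × ℝ)) [IsProbabilityMeasure Q]
    (hQ : Q = ((volume.restrict (Ici (0 : ℝ))).prod ν).withDensity
      (fun p => ENNReal.ofReal (g p.1 p.2)))
    (c₀ : ℝ) (hzbd : ∀ᵐ p ∂Q, 0 ≤ p.2 ∧ p.2 ≤ c₀)
    (c₁ : ℝ) (hmarg : ∀ y : ℝ, (∫⁻ z, ENNReal.ofReal (g y z) ∂ν) ≤ ENNReal.ofReal c₁) :
    ∃ Γ₃ : ℝ, 0 < Γ₃ ∧ ∀ s t : ℝ, 0 ≤ s → 0 ≤ t → s ≠ t → |s - t| < 1 →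
      eLpNorm (fun p : ℝ × ℝ => hker t p.1 p.2 - hker s p.1 p.2) 2 Q
        ≤ ENNReal.ofReal (Γ₃ * (|t - s| * Real.sqrt (Real.log (2 / |t - s|)))) := by
  have hΓ : 0 ≤ 8 * (c₀ ^ 2 + 1) * (|c₁| + 1) := by positivity
  refine ⟨Real.sqrt (8 * (c₀ ^ 2 + 1) * (|c₁| + 1)), Real.sqrt_pos.2 (by positivity), ?_⟩
  intro s t hs ht hne hlt
  wlog hst : s < t generalizing s t
  · rw [abs_sub_comm]
    exact (eLpNorm_sub_comm (fun p : ℝ × ℝ => hker t p.1 p.2) (fun p => hker s p.1 p.2) 2 Q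
      ).trans_le (this t s ht hs hne.symm (by rwa [abs_sub_comm]) (lt_of_le_of_ne (not_lt.1 hst) hne.symm))
  have hδ : 0 < t - s := sub_pos.2 hst
  have hδ1 : t - s ≤ 1 := by rw [abs_sub_comm, abs_of_pos hδ] at hlt; exact hlt.le
  have hL : 0 ≤ Real.log (2 / (t - s)) := Real.log_nonneg (by rw [le_div_iff₀ hδ]; linarith)
  rw [abs_of_pos hδ]
  refine eLpNorm_two_le_ofReal (by positivity)
    ((lintegral_sq_hker_sub_le hg_meas hQ hzbd hmarg hst hδ1).trans (ENNReal.ofReal_le_ofReal ?_))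
  rw [mul_pow, mul_pow, Real.sq_sqrt hΓ, Real.sq_sqrt hL]
  exact sq_mul_le_mul_log_two_div c₀ c₁ hδ hδ1

/-- Lemma 6.1, inequality (24): if `Q` has density `g` with respect to `λ × ν` on
`[0,∞)²`, `0 ≤ z ≤ c₀` `Q`-a.e., and the marginal density `ḡ(y) = ∫ g(y,z) ν(dz)` is
bounded by `c₁`, then there is a constant `Γ₃` such that for `0 < |s−t| < 1`,
`‖h_t − h_s‖_{L²(Q)} ≤ Γ₃ |t−s| √(log(2/|t−s|))`. -/
theorem hker_L2_modulus
    (ν : Measure ℝ) [SigmaFinite ν] (hν : ν (Iio 0) = 0)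
    (g : ℝ → ℝ → ℝ) (hg_meas : Measurable (Function.uncurry g))
    (hg_nonneg : ∀ y z, 0 ≤ g y z)
    (Q : Measure (ℝ × ℝ)) [IsProbabilityMeasure Q]
    (hQ : Q = ((volume.restrict (Ici (0 : ℝ))).prod ν).withDensity
      (fun p => ENNReal.ofReal (g p.1 p.2)))
    (c₀ : ℝ) (hzbd : ∀ᵐ p ∂Q, 0 ≤ p.2 ∧ p.2 ≤ c₀)
    (c₁ : ℝ) (hmarg : ∀ y : ℝ, (∫⁻ z, ENNReal.ofReal (g y z) ∂ν) ≤ ENNReal.ofReal c₁) :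
    ∃ Γ₃ : ℝ, 0 < Γ₃ ∧ ∀ s t : ℝ, 0 ≤ s → 0 ≤ t → s ≠ t → |s - t| < 1 →
      eLpNorm (fun p : ℝ × ℝ => hker t p.1 p.2 - hker s p.1 p.2) 2 Q
        ≤ ENNReal.ofReal (Γ₃ * (|t - s| * Real.sqrt (Real.log (2 / |t - s|)))) :=
  hker_L2_modulus_general ν g hg_meas Q hQ c₀ hzbd c₁ hmarg
end

section
/- Suppose 0 ≤ z ≤ c₀ ν-a.e. on the support of Q and the marginal density ḡ(y) = ∫ g(y,z) ν(dz) satisfies ḡ ≤ c₁. Then there is a constant Γ₃ (depending only on c₀ and c₁) such that for all 0 ≤ a < b and all a ≤ t ≤ b, the L²(Q) norm of the deviation of h_t from the chord between h_a and h_b satisfies ‖h_t − ((t−a)h_b + (b−t)h_a)/(b−a)‖_{L²(Q)} ≤ Γ₃ (b−a). -/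
open Set MeasureTheory
open scoped ENNReal NNReal

/-!
The `√y` terms cancel, so `h_t` minus its chord is `2z` times the chord deviation of the
antitone function `s ↦ √((y − s)₊)` on `[a, b]`. For `y ≤ 2b − a` monotonicity bounds this
deviation by `√((y − a)₊)`, which vanishes for `y ≤ a` and is `O(√(b − a))` otherwise; for
`y > 2b − a` the function is a smooth square root on `[a, b]` and the deviation is
`O((b − a)² (y − b)^(-3/2))`. The squared deviation is thus dominated by an envelope in `y`
of Lebesgue integral `O((b − a)²)`, and `z ≤ c₀` together with the bound `c₁` on the marginal
density carries this over to `L²(Q)`.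
-/

theorem lintegral_comp_fst_withDensity_prod_le {α β : Type*} [MeasurableSpace α]
    [MeasurableSpace β] {μ : Measure α} {ν : Measure β} {w : α × β → ℝ≥0∞} (hw : Measurable w)
    {C : ℝ≥0∞} (hC : ∀ x, ∫⁻ y, w (x, y) ∂ν ≤ C) {F : α → ℝ≥0∞} (hF : Measurable F) :
    ∫⁻ p, F p.1 ∂(μ.prod ν).withDensity w ≤ C * ∫⁻ x, F x ∂μ := by
  rw [lintegral_withDensity_eq_lintegral_mul _ hw (by fun_prop),
    ← lintegral_const_mul _ hF]
  refine (lintegral_prod_le _).trans (lintegral_mono fun x => ?_)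
  simp only [Pi.mul_apply]
  rw [lintegral_mul_const _ (by fun_prop)]
  exact mul_le_mul_left (hC x) _

theorem eLpNorm_two_le_of_lintegral_le {α ε : Type*} [MeasurableSpace α] [ENorm ε]
    {μ : Measure α} {f : α → ε} {c : ℝ≥0∞} (h : ∫⁻ x, ‖f x‖ₑ ^ 2 ∂μ ≤ c ^ 2) :
    eLpNorm f 2 μ ≤ c := by
  have hsq : eLpNorm f 2 μ ^ 2 = ∫⁻ x, ‖f x‖ₑ ^ 2 ∂μ := by
    simpa using eLpNorm_nnreal_pow_eq_lintegral (f := f) (μ := μ) (p := 2) two_ne_zero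
  rwa [← ENNReal.pow_le_pow_left_iff two_ne_zero, hsq]

noncomputable def chordDeviation (f : ℝ → ℝ) (a b t : ℝ) : ℝ :=
  ((t - a) * f b + (b - t) * f a) / (b - a) - f t

theorem abs_chordDeviation_le_of_antitoneOn {f : ℝ → ℝ} {a b t : ℝ}
    (hf : AntitoneOn f (Icc a b)) (hab : a < b) (ht : t ∈ Icc a b) :
    |chordDeviation f a b t| ≤ f a - f b := by
  have ha : a ∈ Icc a b := left_mem_Icc.2 hab.le
  have hb : b ∈ Icc a b := right_mem_Icc.2 hab.le
  have hfbt := hf ht hb ht.2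
  have hfta := hf ha ht ht.1
  have hba : 0 < b - a := sub_pos.2 hab
  have hlo : f b ≤ ((t - a) * f b + (b - t) * f a) / (b - a) := by
    rw [le_div_iff₀ hba]; nlinarith [ht.1, ht.2]
  have hhi : ((t - a) * f b + (b - t) * f a) / (b - a) ≤ f a := by
    rw [div_le_iff₀ hba]; nlinarith [ht.1, ht.2]
  rw [chordDeviation, abs_le]
  constructor <;> linarith

theorem sq_chordDeviation_sqrt_sub_le {a b t y : ℝ} (hab : a < b) (hat : a ≤ t) (htb : t ≤ b)
    (hby : b < y) :
    chordDeviation (fun s => √(y - s)) a b t ^ 2 ≤ (b - a) ^ 4 * (y - b) ^ (-3 : ℝ) := by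
  set A := √(y - a)
  set B := √(y - b)
  set T := √(y - t)
  have hA : A ^ 2 = y - a := Real.sq_sqrt (by linarith)
  have hB : B ^ 2 = y - b := Real.sq_sqrt (by linarith)
  have hT : T ^ 2 = y - t := Real.sq_sqrt (by linarith)
  have hB0 : 0 < B := Real.sqrt_pos.2 (by linarith)
  have hBA : B < A := Real.sqrt_lt_sqrt (by linarith) (by linarith)
  have hBT : B ≤ T := Real.sqrt_le_sqrt (by linarith)
  have hTA : T ≤ A := Real.sqrt_le_sqrt (by linarith)
  have hdev : chordDeviation (fun s => √(y - s)) a b t = -((A - T) * (T - B)) / (A + B) := by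
    rw [chordDeviation, div_sub' (by linarith), div_eq_div_iff (by linarith) (by linarith)]
    rw [show t - a = A ^ 2 - T ^ 2 by linarith, show b - t = T ^ 2 - B ^ 2 by linarith,
      show b - a = A ^ 2 - B ^ 2 by linarith]
    ring
  have hba : b - a = (A - B) * (A + B) := by nlinarith
  have hrpow : (y - b) ^ (-3 : ℝ) = (B ^ 6)⁻¹ := by
    rw [Real.rpow_neg (by linarith), show B ^ 6 = (B ^ 2) ^ 3 by ring, hB]
    norm_cast
  -- `|dev| ≤ (A - B)² / (A + B) = (b - a)² / (A + B)³ ≤ (b - a)² / B³`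
  have hnum : (A - T) * (T - B) ≤ (A - B) ^ 2 := by nlinarith
  have hden : B ^ 6 ≤ (A + B) ^ 6 := pow_le_pow_left₀ hB0.le (by linarith) 6
  rw [hdev, hrpow, hba, div_pow, neg_sq]
  calc ((A - T) * (T - B)) ^ 2 / (A + B) ^ 2 ≤ ((A - B) ^ 2) ^ 2 / (A + B) ^ 2 := by
        gcongr
    _ = ((A - B) * (A + B)) ^ 4 * ((A + B) ^ 6)⁻¹ := by
        field_simp
    _ ≤ ((A - B) * (A + B)) ^ 4 * (B ^ 6)⁻¹ := by gcongr

theorem antitone_sqrt_posPart_sub (y : ℝ) : Antitone fun s : ℝ => √(max (y - s) 0) :=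
  fun _ _ h => Real.sqrt_le_sqrt (max_le_max (by linarith) le_rfl)

theorem hker_sub_chord_eq {a b : ℝ} (hab : a ≠ b) (t y z : ℝ) :
    hker t y z - ((t - a) * hker b y z + (b - t) * hker a y z) / (b - a) =
      2 * z * chordDeviation (fun s => √(max (y - s) 0)) a b t := by
  have : b - a ≠ 0 := sub_ne_zero.2 hab.symm
  simp only [hker, chordDeviation]
  field_simp
  ring

noncomputable def chordEnvelope (a b : ℝ) : ℝ → ℝ≥0∞ :=
  (Ioc a (2 * b - a)).indicator (fun _ => ENNReal.ofReal (2 * (b - a))) +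
    (Ioi (2 * b - a)).indicator (fun y => ENNReal.ofReal ((b - a) ^ 4 * (y - b) ^ (-3 : ℝ)))

theorem measurable_chordEnvelope (a b : ℝ) : Measurable (chordEnvelope a b) :=
  (measurable_const.indicator measurableSet_Ioc).add
    ((by fun_prop : Measurable fun y : ℝ =>
      ENNReal.ofReal ((b - a) ^ 4 * (y - b) ^ (-3 : ℝ))).indicator measurableSet_Ioi)

theorem lintegral_chordEnvelope {a b : ℝ} (hab : a < b) :
    ∫⁻ y, chordEnvelope a b y = ENNReal.ofReal (9 / 2 * (b - a) ^ 2) := by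
  have hba : 0 < b - a := sub_pos.2 hab
  set G : ℝ → ℝ≥0∞ :=
    (Ioi (b - a)).indicator fun x => ENNReal.ofReal ((b - a) ^ 4 * x ^ (-3 : ℝ))
  have hshift : (Ioi (2 * b - a)).indicator
      (fun y => ENNReal.ofReal ((b - a) ^ 4 * (y - b) ^ (-3 : ℝ))) = fun y => G (y - b) := by
    ext y
    simp only [G, indicator, mem_Ioi]
    congr 1
    exact propext ⟨fun h => by linarith, fun h => by linarith⟩
  have htail : ∫⁻ x, G x = ENNReal.ofReal ((b - a) ^ 2 / 2) := by
    rw [lintegral_indicator measurableSet_Ioi, ← ofReal_integral_eq_lintegral_ofReal]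
    · rw [integral_const_mul, integral_Ioi_rpow_of_lt (by norm_num) hba]
      congr 1
      rw [show (-3 : ℝ) + 1 = -(2 : ℕ) by norm_num, Real.rpow_neg hba.le, Real.rpow_natCast]
      field_simp
      ring
    · exact (integrableOn_Ioi_rpow_of_lt (by norm_num) hba).const_mul _
    · filter_upwards [ae_restrict_mem measurableSet_Ioi] with x (hx : b - a < x)
      have : 0 < x := hba.trans hx
      positivity
  rw [chordEnvelope, hshift, Pi.add_def,
    lintegral_add_left (measurable_const.indicator measurableSet_Ioc),
    lintegral_indicator_const measurableSet_Ioc, Real.volume_Ioc,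
    lintegral_sub_right_eq_self G b, htail, ← ENNReal.ofReal_mul (by linarith),
    ← ENNReal.ofReal_add (by nlinarith) (by positivity)]
  congr 1
  ring

theorem ofReal_sq_chordDeviation_le_chordEnvelope {a b t : ℝ} (hab : a < b)
    (ht : t ∈ Icc a b) (y : ℝ) :
    ENNReal.ofReal (chordDeviation (fun s => √(max (y - s) 0)) a b t ^ 2) ≤
      chordEnvelope a b y := by
  rcases le_or_gt y (2 * b - a) with hy | hy
  · have hdev := abs_chordDeviation_le_of_antitoneOn
      ((antitone_sqrt_posPart_sub y).antitoneOn _) hab ht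
    have hsq : chordDeviation (fun s => √(max (y - s) 0)) a b t ^ 2 ≤ max (y - a) 0 := by
      rw [← Real.sq_sqrt (le_max_right (y - a) 0), ← sq_abs]
      exact pow_le_pow_left₀ (abs_nonneg _) (hdev.trans (by simp)) 2
    rcases le_or_gt y a with hya | hya
    · rw [max_eq_right (by linarith)] at hsq
      simp [ENNReal.ofReal_eq_zero.2 hsq]
    · calc ENNReal.ofReal (chordDeviation (fun s => √(max (y - s) 0)) a b t ^ 2)
          ≤ ENNReal.ofReal (2 * (b - a)) :=
            ENNReal.ofReal_le_ofReal (hsq.trans (max_le (by linarith) (by linarith)))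
        _ = (Ioc a (2 * b - a)).indicator (fun _ => ENNReal.ofReal (2 * (b - a))) y := by
            rw [indicator_of_mem (show y ∈ Ioc a (2 * b - a) from ⟨hya, hy⟩)]
        _ ≤ chordEnvelope a b y := le_self_add
  · have hsqrt : chordDeviation (fun s => √(max (y - s) 0)) a b t =
        chordDeviation (fun s => √(y - s)) a b t := by
      simp only [chordDeviation, max_eq_left (by linarith [ht.1, ht.2] : 0 ≤ y - a),
        max_eq_left (by linarith : 0 ≤ y - b), max_eq_left (by linarith [ht.2] : 0 ≤ y - t)]
    calc ENNReal.ofReal (chordDeviation (fun s => √(max (y - s) 0)) a b t ^ 2)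
        ≤ ENNReal.ofReal ((b - a) ^ 4 * (y - b) ^ (-3 : ℝ)) := by
          rw [hsqrt]
          exact ENNReal.ofReal_le_ofReal
            (sq_chordDeviation_sqrt_sub_le hab ht.1 ht.2 (by linarith))
      _ = (Ioi (2 * b - a)).indicator
            (fun y => ENNReal.ofReal ((b - a) ^ 4 * (y - b) ^ (-3 : ℝ))) y :=
          by rw [indicator_of_mem (mem_Ioi.2 hy)]
      _ ≤ chordEnvelope a b y := le_add_self

theorem enorm_hker_sub_chord_sq_le {a b t y z C : ℝ} (hab : a < b) (ht : t ∈ Icc a b)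
    (hz : 0 ≤ z) (hzC : z ≤ C) :
    ‖hker t y z - ((t - a) * hker b y z + (b - t) * hker a y z) / (b - a)‖ₑ ^ 2 ≤
      ENNReal.ofReal (4 * C ^ 2) * chordEnvelope a b y := by
  rw [hker_sub_chord_eq hab.ne, Real.enorm_eq_ofReal_abs, ← ENNReal.ofReal_pow (abs_nonneg _),
    sq_abs, mul_pow, ENNReal.ofReal_mul (by positivity)]
  gcongr ?_ * ?_
  · exact ENNReal.ofReal_le_ofReal (by nlinarith)
  · exact ofReal_sq_chordDeviation_le_chordEnvelope hab ht y

theorem hker_L2_chord_bound_general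
    (ν : Measure ℝ)
    (g : ℝ → ℝ → ℝ) (hg_meas : Measurable (Function.uncurry g))
    (Q : Measure (ℝ × ℝ))
    (hQ : Q = ((volume.restrict (Ici (0 : ℝ))).prod ν).withDensity
      (fun p => ENNReal.ofReal (g p.1 p.2)))
    (c₀ : ℝ) (hzbd : ∀ᵐ p ∂Q, 0 ≤ p.2 ∧ p.2 ≤ c₀)
    (c₁ : ℝ) (hmarg : ∀ y : ℝ, (∫⁻ z, ENNReal.ofReal (g y z) ∂ν) ≤ ENNReal.ofReal c₁) :
    ∃ Γ₃ : ℝ, 0 < Γ₃ ∧ ∀ a b t : ℝ, 0 ≤ a → a < b → t ∈ Icc a b →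
      eLpNorm (fun p : ℝ × ℝ =>
          hker t p.1 p.2 - ((t - a) * hker b p.1 p.2 + (b - t) * hker a p.1 p.2) / (b - a))
        2 Q ≤ ENNReal.ofReal (Γ₃ * (b - a)) := by
  set C₀ := max c₀ 1
  set C₁ := max c₁ 1
  have hC₁ : 0 ≤ C₁ := zero_le_one.trans (le_max_right _ _)
  refine ⟨5 * C₀ * √C₁, by positivity, fun a b t _ hab ht => eLpNorm_two_le_of_lintegral_le ?_⟩
  have hw : Measurable fun p : ℝ × ℝ => ENNReal.ofReal (g p.1 p.2) :=
    ENNReal.measurable_ofReal.comp hg_meas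
  have hmarg' : ∀ y, ∫⁻ z, ENNReal.ofReal (g y z) ∂ν ≤ ENNReal.ofReal C₁ :=
    fun y => (hmarg y).trans (ENNReal.ofReal_le_ofReal (le_max_left _ _))
  have henv := measurable_chordEnvelope a b
  calc _ ≤ ∫⁻ p, ENNReal.ofReal (4 * C₀ ^ 2) * chordEnvelope a b p.1 ∂Q := by
        refine lintegral_mono_ae ?_
        filter_upwards [hzbd] with p hp
        exact enorm_hker_sub_chord_sq_le hab ht hp.1 (hp.2.trans (le_max_left _ _))
    _ ≤ ENNReal.ofReal (4 * C₀ ^ 2) *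
          (ENNReal.ofReal C₁ * ∫⁻ y, chordEnvelope a b y ∂volume.restrict (Ici 0)) := by
        rw [lintegral_const_mul _ (by fun_prop), hQ]
        gcongr
        exact lintegral_comp_fst_withDensity_prod_le hw hmarg' henv
    _ ≤ ENNReal.ofReal (4 * C₀ ^ 2) *
          (ENNReal.ofReal C₁ * ENNReal.ofReal (9 / 2 * (b - a) ^ 2)) := by
        gcongr
        exact (setLIntegral_le_lintegral _ _).trans_eq (lintegral_chordEnvelope hab)
    _ ≤ ENNReal.ofReal (5 * C₀ * √C₁ * (b - a)) ^ 2 := by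
        rw [← ENNReal.ofReal_mul hC₁, ← ENNReal.ofReal_mul (by positivity),
          ← ENNReal.ofReal_pow (by have := hab.le; positivity)]
        refine ENNReal.ofReal_le_ofReal ?_
        rw [mul_pow, mul_pow, mul_pow, Real.sq_sqrt hC₁]
        nlinarith [mul_nonneg (mul_nonneg (sq_nonneg C₀) hC₁) (sq_nonneg (b - a))]

/-- Lemma 6.1, inequality (25): if `Q` has density `g` with respect to `λ × ν` on
`[0,∞)²`, `0 ≤ z ≤ c₀` `Q`-a.e., and the marginal density `ḡ(y) = ∫ g(y,z) ν(dz)` is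
bounded by `c₁`, then there is a constant `Γ₃` such that for all `0 ≤ a < b` and
`t ∈ [a,b]`, `‖h_t − ((t−a)h_b + (b−t)h_a)/(b−a)‖_{L²(Q)} ≤ Γ₃ (b−a)`. -/
theorem hker_L2_chord_bound
    (ν : Measure ℝ) [SigmaFinite ν] (hν : ν (Iio 0) = 0)
    (g : ℝ → ℝ → ℝ) (hg_meas : Measurable (Function.uncurry g))
    (hg_nonneg : ∀ y z, 0 ≤ g y z)
    (Q : Measure (ℝ × ℝ)) [IsProbabilityMeasure Q]
    (hQ : Q = ((volume.restrict (Ici (0 : ℝ))).prod ν).withDensity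
      (fun p => ENNReal.ofReal (g p.1 p.2)))
    (c₀ : ℝ) (hzbd : ∀ᵐ p ∂Q, 0 ≤ p.2 ∧ p.2 ≤ c₀)
    (c₁ : ℝ) (hmarg : ∀ y : ℝ, (∫⁻ z, ENNReal.ofReal (g y z) ∂ν) ≤ ENNReal.ofReal c₁) :
    ∃ Γ₃ : ℝ, 0 < Γ₃ ∧ ∀ a b t : ℝ, 0 ≤ a → a < b → t ∈ Icc a b →
      eLpNorm (fun p : ℝ × ℝ =>
          hker t p.1 p.2 - ((t - a) * hker b p.1 p.2 + (b - t) * hker a p.1 p.2) / (b - a))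
        2 Q ≤ ENNReal.ofReal (Γ₃ * (b - a)) :=
  hker_L2_chord_bound_general ν g hg_meas Q hQ c₀ hzbd c₁ hmarg
end

section
/- Let f be a bounded function on a compact interval [a,b], let f* be the least concave majorant of f on [a,b], and let L be any concave function on [a,b]. Then sup_{a≤t≤b} |f*(t) − f(t)| ≤ 2 sup_{a≤t≤b} |L(t) − f(t)|. -/
open Set

/-- Key step of Proposition 6.3 (via Marshall's lemma): if `f*` is the least concave
majorant of a bounded function `f` on `[a,b]` and `L` is any concave function on `[a,b]`,
then `sup_{[a,b]} |f* − f| ≤ 2 sup_{[a,b]} |L − f|`. -/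
theorem lcm_dist_le_two_concave_dist
    (a b : ℝ) (hab : a ≤ b)
    (f fstar L : ℝ → ℝ)
    (hbd : ∃ C : ℝ, ∀ x ∈ Icc a b, |f x| ≤ C)
    (hlcm : IsLeastConcaveMajorant (Icc a b) f fstar)
    (hL : ConcaveOn ℝ (Icc a b) L) :
    ∀ C : ℝ, (∀ t ∈ Icc a b, |L t - f t| ≤ C) → ∀ t ∈ Icc a b, |fstar t - f t| ≤ 2 * C := by
  intro C hC t ht
  obtain ⟨hconc, hmaj, hleast⟩ := hlcm
  have hLC : ConcaveOn ℝ (Icc a b) (fun x => L x + C) := hL.add_const C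
  have hge : ∀ x ∈ Icc a b, f x ≤ L x + C := by
    intro x hx
    have := abs_le.mp (hC x hx)
    linarith [this.1]
  have hle := hleast _ hLC hge t ht
  have h1 := hmaj t ht
  have h2 := abs_le.mp (hC t ht)
  rw [abs_of_nonneg (by linarith)]
  linarith
end

section
/- Fix x > 0 and suppose σ²(t) = ∫ z² g(t,z) ν(dz) is finite and continuous in a neighborhood of x. Then, as δ ↓ 0, E[ 4Z² (√(Y−x) − √(Y−x−δ))² 1_{Y>x+δ} ] is asymptotically equivalent to δ² log(1/δ) · σ²(x); that is, the ratio of the two quantities tends to 1 as δ ↓ 0 (when σ²(x) > 0), and the expectation is o(δ² log(1/δ)) when σ²(x) = 0. -/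
/-!
Writing `u = Y - x`, the integrand is `Z² k_δ(u)` with `k_δ = sqrtDiffSq δ`, and
`k_δ(u) = 4δ² / (√u + √(u - δ))²` gives `δ²/(u - δ/2) ≤ k_δ(u) ≤ min (4δ²/u) (δ²/(u - δ))`.
Integrating out `Z` against the density turns the expectation into
`∫_{u > δ} k_δ(u) σ²(x + u) du`. For fixed `r > 0` the kernel mass on `(δ, r]` is
`δ² log(1/δ) + O(δ²)`, while the part `u > r` is `O(δ²)` because `σ²` is integrable (`Z` is
bounded). So after dividing by `δ² log(1/δ)` the kernel concentrates at `u = 0`, and continuity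
of `σ²` at `x` gives the limit.
-/

open Set MeasureTheory ProbabilityTheory Filter Metric
open scoped ENNReal NNReal Topology

/-- `σ²(t) = ∫ z² g(t,z) ν(dz)`. -/
noncomputable def sigsq (ν : Measure ℝ) (g : ℝ → ℝ → ℝ) (t : ℝ) : ℝ :=
  ∫ z, z ^ 2 * g t z ∂ν

open Real intervalIntegral

/-- For `u < δ` the second square root is the junk value `√(u - δ) = 0`; only `u ≥ δ` matters. -/
noncomputable def sqrtDiffSq (δ u : ℝ) : ℝ := 4 * (√u - √(u - δ)) ^ 2

@[fun_prop]
lemma continuous_sqrtDiffSq (δ : ℝ) : Continuous (sqrtDiffSq δ) := by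
  unfold sqrtDiffSq; fun_prop

lemma sqrtDiffSq_nonneg (δ u : ℝ) : 0 ≤ sqrtDiffSq δ u := by
  unfold sqrtDiffSq; positivity

section Kernel

variable {δ u : ℝ}

lemma sqrtDiffSq_eq_div (hδu : δ ≤ u) (hu : 0 < u) :
    sqrtDiffSq δ u = 4 * δ ^ 2 / (√u + √(u - δ)) ^ 2 := by
  have hsum : 0 < √u + √(u - δ) := add_pos_of_pos_of_nonneg (sqrt_pos.2 hu) (sqrt_nonneg _)
  have hprod : (√u - √(u - δ)) * (√u + √(u - δ)) = δ := by
    linear_combination sq_sqrt hu.le - sq_sqrt (sub_nonneg.2 hδu)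
  rw [eq_div_iff (by positivity), sqrtDiffSq, mul_assoc, ← mul_pow, hprod]

lemma sqrtDiffSq_le_div (hδu : δ ≤ u) (hu : 0 < u) : sqrtDiffSq δ u ≤ 4 * δ ^ 2 / u := by
  rw [sqrtDiffSq_eq_div hδu hu]
  refine div_le_div_of_nonneg_left (by positivity) hu ?_
  nlinarith [sq_sqrt hu.le, sqrt_nonneg u, sqrt_nonneg (u - δ)]

lemma sqrtDiffSq_le_div_sub (hδ : 0 ≤ δ) (hδu : δ < u) : sqrtDiffSq δ u ≤ δ ^ 2 / (u - δ) := by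
  have hu : 0 < u := hδ.trans_lt hδu
  rw [sqrtDiffSq_eq_div hδu.le hu, ← mul_div_mul_left (δ ^ 2) (u - δ) four_ne_zero]
  refine div_le_div_of_nonneg_left (by positivity) (by linarith) ?_
  have hst : √(u - δ) ≤ √u := sqrt_le_sqrt (by linarith)
  nlinarith [sq_sqrt (sub_nonneg.2 hδu.le), sqrt_nonneg (u - δ)]

lemma div_sub_half_le_sqrtDiffSq (hδ : 0 < δ) (hδu : δ ≤ u) :
    δ ^ 2 / (u - δ / 2) ≤ sqrtDiffSq δ u := by
  have hu : 0 < u := hδ.trans_le hδu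
  rw [sqrtDiffSq_eq_div hδu hu, ← mul_div_mul_left (δ ^ 2) (u - δ / 2) four_ne_zero]
  refine div_le_div_of_nonneg_left (by positivity) (by positivity) ?_
  nlinarith [sq_sqrt hu.le, sq_sqrt (sub_nonneg.2 hδu), sq_nonneg (√u - √(u - δ))]

lemma sqrtDiffSq_le_mul (hδ : 0 < δ) (hδu : δ ≤ u) : sqrtDiffSq δ u ≤ 4 * δ := by
  refine (sqrtDiffSq_le_div hδu (hδ.trans_le hδu)).trans ?_
  rw [div_le_iff₀ (hδ.trans_le hδu)]
  nlinarith

end Kernel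

lemma intervalIntegrable_div_sub {a b c d : ℝ} (hda : d < a) (hab : a ≤ b) :
    IntervalIntegrable (fun u => c / (u - d)) volume a b := by
  refine ContinuousOn.intervalIntegrable (continuousOn_const.div (by fun_prop) fun u hu => ?_)
  rw [uIcc_of_le hab] at hu
  linarith [hu.1]

lemma integral_div_sub {a b c d : ℝ} (hda : d < a) (hab : a ≤ b) :
    ∫ u in a..b, c / (u - d) = c * log ((b - d) / (a - d)) := by
  simp_rw [div_eq_mul_inv c]
  rw [intervalIntegral.integral_const_mul, integral_comp_sub_right (fun u => u⁻¹),
    integral_inv_of_pos (by linarith) (by linarith)]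

lemma tendsto_log_one_div_nhdsGT_zero : Tendsto (fun δ : ℝ => log (1 / δ)) (𝓝[>] 0) atTop := by
  simpa only [one_div, log_inv, Function.comp_def] using
    tendsto_neg_atBot_atTop.comp tendsto_log_nhdsGT_zero

section KernelMass

variable {δ r : ℝ}

lemma mul_log_le_integral_sqrtDiffSq (hδ : 0 < δ) (hδr : δ ≤ r) :
    δ ^ 2 * log (r / δ) ≤ ∫ u in δ..r, sqrtDiffSq δ u := by
  have hd : δ / 2 < δ := half_lt_self hδ
  have hratio : r / δ ≤ (r - δ / 2) / (δ - δ / 2) := by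
    rw [div_le_div_iff₀ hδ (by linarith)]; nlinarith
  calc δ ^ 2 * log (r / δ) ≤ δ ^ 2 * log ((r - δ / 2) / (δ - δ / 2)) := by
        gcongr
        exact div_pos (hδ.trans_le hδr) hδ
    _ = ∫ u in δ..r, δ ^ 2 / (u - δ / 2) := (integral_div_sub hd hδr).symm
    _ ≤ ∫ u in δ..r, sqrtDiffSq δ u :=
        integral_mono_on hδr (intervalIntegrable_div_sub hd hδr)
          ((continuous_sqrtDiffSq δ).intervalIntegrable _ _)
          fun u hu => div_sub_half_le_sqrtDiffSq hδ hu.1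

lemma integral_sqrtDiffSq_le (hδ : 0 < δ) (hδr : 2 * δ ≤ r) :
    ∫ u in δ..r, sqrtDiffSq δ u ≤ δ ^ 2 * (log (r / δ) + 4 * log 2) := by
  have hk : ∀ a b, IntervalIntegrable (sqrtDiffSq δ) volume a b :=
    fun a b => (continuous_sqrtDiffSq δ).intervalIntegrable a b
  have h2δ : δ ≤ 2 * δ := by linarith
  have near : ∫ u in δ..2 * δ, sqrtDiffSq δ u ≤ 4 * δ ^ 2 * log 2 := by
    have h := integral_div_sub (c := 4 * δ ^ 2) hδ h2δ
    simp only [sub_zero, mul_div_cancel_right₀ _ hδ.ne'] at h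
    rw [← h]
    refine integral_mono_on h2δ (hk _ _) (by simpa using intervalIntegrable_div_sub hδ h2δ)
      fun u hu => sqrtDiffSq_le_div hu.1 (hδ.trans_le hu.1)
  have far : ∫ u in 2 * δ..r, sqrtDiffSq δ u ≤ δ ^ 2 * log (r / δ) := by
    have hδ2 : δ < 2 * δ := by linarith
    calc ∫ u in 2 * δ..r, sqrtDiffSq δ u ≤ ∫ u in 2 * δ..r, δ ^ 2 / (u - δ) :=
          integral_mono_on hδr (hk _ _) (intervalIntegrable_div_sub hδ2 hδr)
            fun u hu => sqrtDiffSq_le_div_sub hδ.le (hδ2.trans_le hu.1)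
      _ = δ ^ 2 * log ((r - δ) / (2 * δ - δ)) := integral_div_sub hδ2 hδr
      _ ≤ δ ^ 2 * log (r / δ) := by
        rw [show 2 * δ - δ = δ by ring]
        gcongr
        · exact div_pos (by linarith) hδ
        · linarith
  rw [← integral_add_adjacent_intervals (hk δ (2 * δ)) (hk (2 * δ) r)]
  linarith

lemma tendsto_integral_sqrtDiffSq_div (hr : 0 < r) :
    Tendsto (fun δ => (∫ u in δ..r, sqrtDiffSq δ u) / (δ ^ 2 * log (1 / δ))) (𝓝[>] 0) (𝓝 1) := by
  have hlim : ∀ c : ℝ, Tendsto (fun δ => 1 + c / log (1 / δ)) (𝓝[>] 0) (𝓝 1) := fun c => by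
    simpa using (tendsto_log_one_div_nhdsGT_zero.const_div_atTop c).const_add 1
  have hsmall : ∀ᶠ δ in 𝓝[>] (0 : ℝ), 0 < δ ∧ 2 * δ ≤ r ∧ 0 < log (1 / δ) := by
    filter_upwards [Ioo_mem_nhdsGT (lt_min (half_pos hr) one_pos)] with δ ⟨hδ, hδr⟩
    refine ⟨hδ, by linarith [hδr.trans_le (min_le_left _ _)], log_pos ?_⟩
    exact (one_lt_div hδ).2 (hδr.trans_le (min_le_right _ _))
  have hratio : ∀ᶠ δ in 𝓝[>] (0 : ℝ), ∀ c, 1 + c / log (1 / δ) =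
      δ ^ 2 * (log (r / δ) + (c - log r)) / (δ ^ 2 * log (1 / δ)) := by
    filter_upwards [hsmall] with δ ⟨hδ, _, hL⟩ c
    rw [div_eq_mul_one_div r, log_mul hr.ne' (by positivity)]
    field_simp
    ring
  refine tendsto_of_tendsto_of_tendsto_of_le_of_le' (hlim (log r)) (hlim (log r + 4 * log 2)) ?_ ?_
  all_goals
    filter_upwards [hsmall, hratio] with δ ⟨hδ, hδr, hL⟩ h
    rw [h]
    refine div_le_div_of_nonneg_right ?_ (by positivity)
  · simpa using mul_log_le_integral_sqrtDiffSq hδ (by linarith)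
  · simpa using integral_sqrtDiffSq_le hδ hδr

end KernelMass

lemma abs_setIntegral_mul_sub_mul_le {α : Type*} [MeasurableSpace α] {μ : Measure α}
    {s : Set α} {k S : α → ℝ} {a η : ℝ} (hs : MeasurableSet s) (hk : IntegrableOn k s μ)
    (hkS : IntegrableOn (fun y => k y * S y) s μ) (hk0 : ∀ y ∈ s, 0 ≤ k y)
    (hS : ∀ y ∈ s, |S y - a| ≤ η) :
    |∫ y in s, k y * S y ∂μ - a * ∫ y in s, k y ∂μ| ≤ η * ∫ y in s, k y ∂μ := by
  rw [← MeasureTheory.integral_const_mul, ← integral_sub hkS (hk.const_mul a),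
    ← MeasureTheory.integral_const_mul, ← Real.norm_eq_abs]
  refine norm_integral_le_of_norm_le (hk.const_mul η) ((ae_restrict_iff' hs).2 ?_)
  refine ae_of_all _ fun y hy => ?_
  rw [Real.norm_eq_abs, ← mul_comm (k y), ← mul_sub, abs_mul, abs_of_nonneg (hk0 y hy), mul_comm η]
  exact mul_le_mul_of_nonneg_left (hS y hy) (hk0 y hy)

section Localization

variable {S : ℝ → ℝ} {x r δ : ℝ}

lemma integrableOn_sqrtDiffSq_mul (hS : IntegrableOn S (Ioi x)) (hδ : 0 < δ) :
    IntegrableOn (fun y => sqrtDiffSq δ (y - x) * S y) (Ioi (x + δ)) := by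
  refine (hS.mono_set (Ioi_subset_Ioi (by linarith))).bdd_mul (c := 4 * δ)
    (by fun_prop) ((ae_restrict_iff' measurableSet_Ioi).2 (ae_of_all _ fun y hy => ?_))
  rw [Real.norm_of_nonneg (sqrtDiffSq_nonneg _ _)]
  exact sqrtDiffSq_le_mul hδ (by linarith [mem_Ioi.1 hy])

lemma abs_setIntegral_sqrtDiffSq_mul_le (hS : IntegrableOn S (Ioi (x + r))) (hr : 0 < r)
    (hδr : δ ≤ r) :
    |∫ y in Ioi (x + r), sqrtDiffSq δ (y - x) * S y|
      ≤ 4 * δ ^ 2 / r * ∫ y in Ioi (x + r), |S y| := by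
  rw [← MeasureTheory.integral_const_mul, ← Real.norm_eq_abs]
  refine norm_integral_le_of_norm_le (hS.norm.const_mul _)
    ((ae_restrict_iff' measurableSet_Ioi).2 (ae_of_all _ fun y hy => ?_))
  have hxy : r < y - x := by linarith [mem_Ioi.1 hy]
  rw [norm_mul, Real.norm_of_nonneg (sqrtDiffSq_nonneg _ _), Real.norm_eq_abs]
  refine mul_le_mul_of_nonneg_right ?_ (abs_nonneg _)
  calc sqrtDiffSq δ (y - x) ≤ 4 * δ ^ 2 / (y - x) := sqrtDiffSq_le_div (by linarith) (by linarith)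
    _ ≤ 4 * δ ^ 2 / r := div_le_div_of_nonneg_left (by positivity) hr hxy.le

lemma setIntegral_Ioc_sqrtDiffSq (hδr : δ ≤ r) :
    ∫ y in Ioc (x + δ) (x + r), sqrtDiffSq δ (y - x) = ∫ u in δ..r, sqrtDiffSq δ u := by
  rw [← integral_of_le (by linarith), integral_comp_sub_right (sqrtDiffSq δ)]
  simp

lemma abs_setIntegral_sqrtDiffSq_mul_sub_le {η : ℝ} (hS : IntegrableOn S (Ioi x)) (hδ : 0 < δ)
    (hδr : δ ≤ r) (hosc : ∀ y ∈ Ioc x (x + r), |S y - S x| ≤ η) :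
    |(∫ y in Ioi (x + δ), sqrtDiffSq δ (y - x) * S y) - S x * ∫ u in δ..r, sqrtDiffSq δ u|
      ≤ η * (∫ u in δ..r, sqrtDiffSq δ u) + 4 * δ ^ 2 / r * ∫ y in Ioi x, |S y| := by
  have hint := integrableOn_sqrtDiffSq_mul hS hδ
  have hsplit := Ioc_union_Ioi_eq_Ioi (show x + δ ≤ x + r by linarith)
  rw [← hsplit] at hint
  rw [← hsplit, setIntegral_union Ioc_disjoint_Ioi_same measurableSet_Ioi
    (hint.mono_set subset_union_left) (hint.mono_set subset_union_right),
    ← setIntegral_Ioc_sqrtDiffSq (x := x) hδr]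
  have near := abs_setIntegral_mul_sub_mul_le (k := fun y => sqrtDiffSq δ (y - x))
    measurableSet_Ioc (by fun_prop : Continuous fun y => sqrtDiffSq δ (y - x)).integrableOn_Ioc
    (hint.mono_set subset_union_left) (fun y _ => sqrtDiffSq_nonneg δ (y - x))
    (fun y hy => hosc y ⟨by linarith [hy.1], hy.2⟩)
  have far := abs_setIntegral_sqrtDiffSq_mul_le (x := x) (r := r)
    (hS.mono_set (Ioi_subset_Ioi (by linarith))) (hδ.trans_le hδr) hδr
  have tail : ∫ y in Ioi (x + r), |S y| ≤ ∫ y in Ioi x, |S y| :=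
    setIntegral_mono_set hS.abs (ae_of_all _ fun y => abs_nonneg (S y))
      (Ioi_subset_Ioi (by linarith)).eventuallyLE
  have h4 : 0 ≤ 4 * δ ^ 2 / r := div_nonneg (by positivity) (by linarith)
  rw [add_sub_right_comm]
  exact (abs_add_le _ _).trans (add_le_add near (far.trans (mul_le_mul_of_nonneg_left tail h4)))

end Localization

lemma abs_div_sub_le_of_abs_sub_mul_le {E J a η C D : ℝ} (hD : 0 < D)
    (h : |E - a * J| ≤ η * J + C) : |E / D - a| ≤ η * (J / D) + |a| * |J / D - 1| + C / D := by
  have hsplit : E / D - a = (E - a * J) / D + a * (J / D - 1) := by field_simp; ring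
  calc |E / D - a| ≤ |E - a * J| / D + |a| * |J / D - 1| := by
        rw [hsplit, ← abs_of_pos hD, ← abs_div, ← abs_mul, abs_of_pos hD]
        exact abs_add_le _ _
    _ ≤ (η * J + C) / D + |a| * |J / D - 1| := by gcongr
    _ = η * (J / D) + |a| * |J / D - 1| + C / D := by ring

theorem tendsto_setIntegral_sqrtDiffSq_mul_div {S : ℝ → ℝ} {x : ℝ} (hS : IntegrableOn S (Ioi x))
    (hSx : ContinuousWithinAt S (Ioi x) x) :
    Tendsto (fun δ => (∫ y in Ioi (x + δ), sqrtDiffSq δ (y - x) * S y) / (δ ^ 2 * log (1 / δ)))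
      (𝓝[>] 0) (𝓝 (S x)) := by
  refine Metric.tendsto_nhds.2 fun η hη => ?_
  obtain ⟨r, hr, hosc⟩ : ∃ r > 0, ∀ y ∈ Ioc x (x + r), |S y - S x| ≤ η / 2 := by
    obtain ⟨d, hd, h⟩ := Metric.continuousWithinAt_iff.1 hSx (η / 2) (half_pos hη)
    refine ⟨d / 2, half_pos hd, fun y hy => ?_⟩
    have hyx : dist y x < d := by
      rw [Real.dist_eq, abs_of_pos (sub_pos.2 hy.1)]; linarith [hy.2]
    exact (Real.dist_eq (S y) (S x) ▸ h hy.1 hyx).le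
  set J := fun δ => ∫ u in δ..r, sqrtDiffSq δ u
  have hJ := tendsto_integral_sqrtDiffSq_div hr
  have hlim : Tendsto (fun δ => η / 2 * (J δ / (δ ^ 2 * log (1 / δ))) +
      |S x| * |J δ / (δ ^ 2 * log (1 / δ)) - 1| + 4 * (∫ y in Ioi x, |S y|) / r / log (1 / δ))
      (𝓝[>] 0) (𝓝 (η / 2)) := by
    simpa using ((hJ.const_mul (η / 2)).add ((hJ.sub_const 1).abs.const_mul |S x|)).add
      (tendsto_log_one_div_nhdsGT_zero.const_div_atTop (4 * (∫ y in Ioi x, |S y|) / r))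
  filter_upwards [hlim.eventually (gt_mem_nhds (half_lt_self hη)),
    Ioo_mem_nhdsGT (lt_min hr one_pos)] with δ hlt ⟨hδ, hδr⟩
  have hL : 0 < log (1 / δ) := log_pos ((one_lt_div hδ).2 (hδr.trans_le (min_le_right _ _)))
  have hbound := abs_setIntegral_sqrtDiffSq_mul_sub_le hS hδ
    (hδr.trans_le (min_le_left _ _)).le hosc
  rw [Real.dist_eq]
  refine (abs_div_sub_le_of_abs_sub_mul_le (by positivity) hbound).trans_lt ?_
  convert hlt using 2
  field_simp

lemma integral_withDensity_prod {α β : Type*} [MeasurableSpace α] [MeasurableSpace β]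
    {μ : Measure α} {ν : Measure β} [SFinite μ] [SFinite ν] {g : α → β → ℝ}
    (hg : Measurable (Function.uncurry g)) (hg0 : ∀ a b, 0 ≤ g a b) {h : α × β → ℝ}
    (hh : Integrable h ((μ.prod ν).withDensity fun p => ENNReal.ofReal (g p.1 p.2))) :
    Integrable (fun a => ∫ b, g a b * h (a, b) ∂ν) μ ∧
      ∫ p, h p ∂(μ.prod ν).withDensity (fun p => ENNReal.ofReal (g p.1 p.2))
        = ∫ a, ∫ b, g a b * h (a, b) ∂ν ∂μ := by
  have hf : Measurable fun p : α × β => (g p.1 p.2).toNNReal := measurable_real_toNNReal.comp hg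
  have hsmul : (fun p : α × β => (g p.1 p.2).toNNReal • h p) = fun p => g p.1 p.2 * h p := by
    ext p; rw [NNReal.smul_def, Real.coe_toNNReal _ (hg0 _ _), smul_eq_mul]
  have hint : Integrable (fun p : α × β => g p.1 p.2 * h p) (μ.prod ν) :=
    hsmul ▸ (integrable_withDensity_iff_integrable_smul hf).1 hh
  refine ⟨hint.integral_prod_left, ?_⟩
  rw [← integral_prod _ hint, ← hsmul]
  exact integral_withDensity_eq_integral_smul hf h

section Law

variable {Ω : Type*} [MeasureSpace Ω] [IsProbabilityMeasure (ℙ : Measure Ω)]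
  {ν : Measure ℝ} [SFinite ν] {g : ℝ → ℝ → ℝ} {Y Z : Ω → ℝ}

lemma integral_mul_sq_eq_integral_mul_sigsq {μ : Measure ℝ} [SFinite μ]
    (hg : Measurable (Function.uncurry g)) (hg0 : ∀ y z, 0 ≤ g y z)
    (hY : Measurable Y) (hZ : Measurable Z)
    (hlaw : Measure.map (fun ω => (Y ω, Z ω)) ℙ
      = (μ.prod ν).withDensity (fun p => ENNReal.ofReal (g p.1 p.2)))
    {c : ℝ} (hZc : ∀ᵐ ω, |Z ω| ≤ c) {w : ℝ → ℝ} (hw : Measurable w) {C : ℝ}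
    (hwC : ∀ y, |w y| ≤ C) :
    Integrable (fun y => w y * sigsq ν g y) μ ∧
      ∫ ω, w (Y ω) * Z ω ^ 2 = ∫ y, w y * sigsq ν g y ∂μ := by
  have hYZ : Measurable fun ω => (Y ω, Z ω) := hY.prodMk hZ
  have hh : Measurable fun p : ℝ × ℝ => w p.1 * p.2 ^ 2 := by fun_prop
  have hint :
      Integrable (fun p : ℝ × ℝ => w p.1 * p.2 ^ 2) (Measure.map (fun ω => (Y ω, Z ω)) ℙ) := by
    rw [integrable_map_measure hh.aestronglyMeasurable hYZ.aemeasurable]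
    refine (integrable_const (C * c ^ 2)).mono' (hh.comp hYZ).aestronglyMeasurable ?_
    filter_upwards [hZc] with ω hω
    rw [Function.comp_apply, norm_mul, norm_pow, Real.norm_eq_abs, Real.norm_eq_abs]
    exact mul_le_mul (hwC _) (pow_le_pow_left₀ (abs_nonneg _) hω 2) (by positivity)
      ((abs_nonneg _).trans (hwC 0))
  have hinner : ∀ y, ∫ z, g y z * (w y * z ^ 2) ∂ν = w y * sigsq ν g y := fun y => by
    rw [sigsq, ← MeasureTheory.integral_const_mul]; congr 1; ext z; ring
  rw [hlaw] at hint
  obtain ⟨hint', heq⟩ := integral_withDensity_prod hg hg0 hint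
  simp only [hinner] at hint' heq
  refine ⟨hint', ?_⟩
  rw [← heq, ← hlaw, integral_map hYZ.aemeasurable hh.aestronglyMeasurable]

lemma integral_ite_sqrtDiffSq_eq (hg : Measurable (Function.uncurry g)) (hg0 : ∀ y z, 0 ≤ g y z)
    (hY : Measurable Y) (hZ : Measurable Z)
    (hlaw : Measure.map (fun ω => (Y ω, Z ω)) ℙ
      = ((volume.restrict (Ici (0 : ℝ))).prod ν).withDensity
          (fun p => ENNReal.ofReal (g p.1 p.2)))
    {c : ℝ} (hZc : ∀ᵐ ω, |Z ω| ≤ c) {x δ : ℝ} (hx : 0 ≤ x) (hδ : 0 < δ) :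
    (∫ ω, if x + δ < Y ω then 4 * Z ω ^ 2 * (√(Y ω - x) - √(Y ω - x - δ)) ^ 2 else 0)
      = ∫ y in Ioi (x + δ), sqrtDiffSq δ (y - x) * sigsq ν g y := by
  have hwC : ∀ y, |(Ioi (x + δ)).indicator (fun y => sqrtDiffSq δ (y - x)) y| ≤ 4 * δ := by
    intro y
    by_cases hy : y ∈ Ioi (x + δ)
    · rw [indicator_of_mem hy, abs_of_nonneg (sqrtDiffSq_nonneg _ _)]
      exact sqrtDiffSq_le_mul hδ (by linarith [mem_Ioi.1 hy])
    · rw [indicator_of_notMem hy, abs_zero]; positivity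
  have hE := (integral_mul_sq_eq_integral_mul_sigsq hg hg0 hY hZ hlaw hZc
    ((by fun_prop : Measurable fun y => sqrtDiffSq δ (y - x)).indicator measurableSet_Ioi) hwC).2
  have hite : ∀ ω, (if x + δ < Y ω then 4 * Z ω ^ 2 * (√(Y ω - x) - √(Y ω - x - δ)) ^ 2 else 0)
      = (Ioi (x + δ)).indicator (fun y => sqrtDiffSq δ (y - x)) (Y ω) * Z ω ^ 2 := fun ω => by
    by_cases h : x + δ < Y ω
    · rw [if_pos h, indicator_of_mem (mem_Ioi.2 h), sqrtDiffSq]; ring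
    · rw [if_neg h, indicator_of_notMem (mt mem_Ioi.1 h), zero_mul]
  simp_rw [hite, hE, ← indicator_mul_left]
  rw [MeasureTheory.integral_indicator measurableSet_Ioi,
    Measure.restrict_restrict measurableSet_Ioi, inter_eq_left.2 (Ioi_subset_Ici (by linarith))]

end Law

theorem variance_asymptotics_general
    {Ω : Type*} [MeasureSpace Ω] [IsProbabilityMeasure (ℙ : Measure Ω)]
    (ν : Measure ℝ) [SigmaFinite ν]
    (g : ℝ → ℝ → ℝ) (hg_meas : Measurable (Function.uncurry g))
    (hg_nonneg : ∀ y z, 0 ≤ g y z)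
    (Y Z : Ω → ℝ) (hY : Measurable Y) (hZ : Measurable Z)
    (hlaw : Measure.map (fun ω => (Y ω, Z ω)) ℙ
      = ((volume.restrict (Ici (0 : ℝ))).prod ν).withDensity
          (fun p => ENNReal.ofReal (g p.1 p.2)))
    (c₀ : ℝ) (hZbd : ∀ᵐ ω ∂ℙ, 0 ≤ Z ω ∧ Z ω ≤ c₀)
    (x : ℝ) (hx : 0 < x) (ε : ℝ) (hε : 0 < ε)
    (hcont : ContinuousOn (sigsq ν g) (ball x ε)) :
    Tendsto (fun δ : ℝ =>
        (∫ ω, if x + δ < Y ω then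
            4 * Z ω ^ 2 * (Real.sqrt (Y ω - x) - Real.sqrt (Y ω - x - δ)) ^ 2
          else 0)
          / (δ ^ 2 * Real.log (1 / δ)))
      (𝓝[>] 0) (𝓝 (sigsq ν g x)) := by
  have hZc : ∀ᵐ ω, |Z ω| ≤ c₀ := hZbd.mono fun ω h => abs_le.2 ⟨by linarith [h.1, h.2], h.2⟩
  have hσ : IntegrableOn (sigsq ν g) (Ioi x) := by
    have h : IntegrableOn (fun y => 1 * sigsq ν g y) (Ici 0) :=
      (integral_mul_sq_eq_integral_mul_sigsq hg_meas hg_nonneg hY hZ hlaw hZc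
        measurable_const (C := 1) fun _ => le_of_eq abs_one).1
    simpa using h.mono_set (Ioi_subset_Ici hx.le)
  refine (tendsto_setIntegral_sqrtDiffSq_mul_div hσ
    (hcont.continuousAt (ball_mem_nhds x hε)).continuousWithinAt).congr' ?_
  filter_upwards [self_mem_nhdsWithin] with δ hδ
  rw [integral_ite_sqrtDiffSq_eq hg_meas hg_nonneg hY hZ hlaw hZc hx.le hδ]

/-- The key variance computation in the proof of Theorem 3.2: for `x > 0` with `σ²`
finite and continuous near `x`, as `δ ↓ 0`,
`E[4Z²(√(Y−x) − √(Y−x−δ))² 1_{Y>x+δ}] / (δ² log(1/δ)) → σ²(x)`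
(asymptotic equivalence to `δ² log(1/δ) σ²(x)` when `σ²(x) > 0`, and `o(δ² log(1/δ))`
when `σ²(x) = 0`). -/
theorem variance_asymptotics
    {Ω : Type*} [MeasureSpace Ω] [IsProbabilityMeasure (ℙ : Measure Ω)]
    (ν : Measure ℝ) [SigmaFinite ν] (hν : ν (Iio 0) = 0)
    (g : ℝ → ℝ → ℝ) (hg_meas : Measurable (Function.uncurry g))
    (hg_nonneg : ∀ y z, 0 ≤ g y z)
    (Y Z : Ω → ℝ) (hY : Measurable Y) (hZ : Measurable Z)
    (hlaw : Measure.map (fun ω => (Y ω, Z ω)) ℙ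
      = ((volume.restrict (Ici (0 : ℝ))).prod ν).withDensity
          (fun p => ENNReal.ofReal (g p.1 p.2)))
    (c₀ : ℝ) (hZbd : ∀ᵐ ω ∂ℙ, 0 ≤ Z ω ∧ Z ω ≤ c₀)
    (x : ℝ) (hx : 0 < x) (ε : ℝ) (hε : 0 < ε)
    (hfin : ∀ t ∈ ball x ε, Integrable (fun z => z ^ 2 * g t z) ν)
    (hcont : ContinuousOn (sigsq ν g) (ball x ε)) :
    Tendsto (fun δ : ℝ =>
        (∫ ω, if x + δ < Y ω then
            4 * Z ω ^ 2 * (Real.sqrt (Y ω - x) - Real.sqrt (Y ω - x - δ)) ^ 2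
          else 0)
          / (δ ^ 2 * Real.log (1 / δ)))
      (𝓝[>] 0) (𝓝 (sigsq ν g x)) :=
  variance_asymptotics_general ν g hg_meas hg_nonneg Y Z hY hZ hlaw c₀ hZbd x hx ε hε hcont
end
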